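/- Let f : ℤⁿ → ℝ ∪ {+∞} satisfy the DDM inequality f(x) + f(y) ≥ f(μ(x,y)) + f(μ(y,x)) for all x, y ∈ ℤⁿ with ‖x − y‖_∞ = 2, and suppose dom f is a DDM-convex set. Let x ∈ dom f and y ∈ ℤⁿ with ‖y − x‖_∞ = m, set A_k = {i : y_i − x_i ≥ k} and B_k = {i : y_i − x_i ≤ −k} for k = 1,…,m, and let (I, J) be a partition of {1, …, m}. Put d₁ = Σ_{i∈I} (1_{A_i} − 1_{B_i}) and d₂ = Σ_{j∈J} (1_{A_j} − 1_{B_j}). Then f(x) + f(x + d₁ + d₂) ≥ f(x + d₁) + f(x + d₂). -/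

import Mathlib

open Finset

/-- Directed midpoint `μ(x,y)`: round `(xᵢ+yᵢ)/2` towards `xᵢ`, componentwise:
`μ(x,y)ᵢ = ⌈(xᵢ+yᵢ)/2⌉` if `xᵢ ≥ yᵢ`, and `μ(x,y)ᵢ = ⌊(xᵢ+yᵢ)/2⌋` if `xᵢ < yᵢ`. -/
def dmu {n : ℕ} (x y : Fin n → ℤ) : Fin n → ℤ := fun i =>
  if y i ≤ x i then ⌈((x i + y i : ℤ) : ℚ) / 2⌉ else ⌊((x i + y i : ℤ) : ℚ) / 2⌋

/-- The ℓ∞-norm of an integer vector, as a natural number. -/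
def normInf {n : ℕ} (z : Fin n → ℤ) : ℕ := Finset.univ.sup fun i => (z i).natAbs

/-- A set `S ⊆ ℤⁿ` is DDM-convex if `x, y ∈ S` implies `μ(x,y), μ(y,x) ∈ S`. -/
def DDMConvexSet {n : ℕ} (S : Set (Fin n → ℤ)) : Prop :=
  ∀ x ∈ S, ∀ y ∈ S, dmu x y ∈ S ∧ dmu y x ∈ S

/-- The vector `1_{A_k} - 1_{B_k}` associated with the pair `(x, y)`, where
`A_k = {i : yᵢ - xᵢ ≥ k}` and `B_k = {i : yᵢ - xᵢ ≤ -k}`. -/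
def chi {n : ℕ} (x y : Fin n → ℤ) (k : ℕ) : Fin n → ℤ := fun i =>
  (if (k : ℤ) ≤ y i - x i then 1 else 0) - (if y i - x i ≤ -(k : ℤ) then 1 else 0)


/-- truncated halving (toward 0) -/
def tH (c : ℤ) : ℤ := if 0 ≤ c then c / 2 else -((-c) / 2)

lemma floor_half (a : ℤ) : ⌊((a : ℚ)) / 2⌋ = a / 2 := by
  have := Rat.floor_intCast_div_natCast a 2
  simpa using this

lemma ceil_half (a : ℤ) : ⌈((a : ℚ)) / 2⌉ = -((-a) / 2) := by
  rw [show ((a:ℚ))/2 = -((-a : ℤ) / 2 : ℚ) by push_cast; ring]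
  rw [Int.ceil_neg, floor_half]

lemma dmu_apply {n : ℕ} (a b : Fin n → ℤ) (i : Fin n) :
    dmu a b i = a i + tH (b i - a i) := by
  unfold dmu tH
  split_ifs with h1 h2 h2
  · rw [show ((a i + b i : ℤ) : ℚ) / 2 = ((a i + b i : ℤ) : ℚ) / 2 from rfl, ceil_half]
    omega
  · rw [ceil_half]; omega
  · rw [floor_half]; omega
  · rw [floor_half]; omega

lemma tH_natAbs (c : ℤ) : (tH c).natAbs = c.natAbs / 2 := by
  unfold tH; split_ifs <;> omega

lemma aH_natAbs (c : ℤ) : (c - tH c).natAbs = (c.natAbs + 1) / 2 := by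
  unfold tH; split_ifs <;> omega

-- normInf lemmas
lemma le_normInf {n : ℕ} (z : Fin n → ℤ) (i : Fin n) : (z i).natAbs ≤ normInf z :=
  Finset.le_sup (f := fun i => (z i).natAbs) (Finset.mem_univ i)

lemma normInf_le {n : ℕ} {z : Fin n → ℤ} {m : ℕ} (h : ∀ i, (z i).natAbs ≤ m) :
    normInf z ≤ m := Finset.sup_le fun i _ => h i

lemma normInf_eq {n : ℕ} {z : Fin n → ℤ} {m : ℕ} (h1 : ∀ i, (z i).natAbs ≤ m)
    (h2 : ∃ i, (z i).natAbs = m) : normInf z = m := by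
  obtain ⟨i, hi⟩ := h2
  exact le_antisymm (normInf_le h1) (hi ▸ le_normInf z i)

lemma exists_normInf {n : ℕ} (z : Fin n → ℤ) (h : normInf z ≠ 0) :
    ∃ i, (z i).natAbs = normInf z := by
  rcases isEmpty_or_nonempty (Fin n) with he | hne
  · exfalso; apply h; unfold normInf; simp
  · obtain ⟨i, _, hi⟩ := Finset.exists_mem_eq_sup Finset.univ univ_nonempty
      (fun i : Fin n => (z i).natAbs)
    exact ⟨i, hi.symm⟩

lemma normInf_comm {n : ℕ} (a b : Fin n → ℤ) : normInf (a - b) = normInf (b - a) := by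
  unfold normInf
  apply Finset.sup_congr rfl
  intro i _
  simp [Pi.sub_apply]
  omega

-- chi depends only on difference
lemma chi_diff {n : ℕ} {x y x' y' : Fin n → ℤ} (h : y - x = y' - x') (k : ℕ) :
    chi x y k = chi x' y' k := by
  funext i
  unfold chi
  have : y i - x i = y' i - x' i := by
    have := congrFun h i; simpa using this
  rw [this]

lemma chi_neg {n : ℕ} (x y : Fin n → ℤ) (k : ℕ) (hk : 1 ≤ k) :
    chi y x k = -chi x y k := by
  funext i
  unfold chi
  simp only [Pi.neg_apply]
  have : (1:ℤ) ≤ (k:ℤ) := by exact_mod_cast hk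
  split_ifs <;> omega

-- shift lemma: chi (x + chi x y 1) y k = chi x y (k+1) for k ≥ 1
lemma chi_shift {n : ℕ} (x y : Fin n → ℤ) (k : ℕ) (hk : 1 ≤ k) :
    chi (x + chi x y 1) y k = chi x y (k + 1) := by
  funext i
  unfold chi
  simp only [Pi.add_apply, Pi.sub_apply]
  have hk' : (1:ℤ) ≤ (k:ℤ) := by exact_mod_cast hk
  push_cast
  split_ifs <;> omega

lemma chi_shift' {n : ℕ} (x y : Fin n → ℤ) (k : ℕ) (hk : 1 ≤ k) :
    chi x (y - chi x y 1) k = chi x y (k + 1) := by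
  rw [chi_diff (x := x) (y := y - chi x y 1) (x' := x + chi x y 1) (y' := y) (by abel) k]
  exact chi_shift x y k hk

-- the sum of chi over Icc 1 m : scalar version
lemma sum_chi_scalar (m : ℕ) (d : ℤ) :
    (∑ k ∈ Icc 1 m, ((if (k:ℤ) ≤ d then (1:ℤ) else 0) - (if d ≤ -(k:ℤ) then 1 else 0)))
      = if (m:ℤ) ≤ d then (m:ℤ) else if d ≤ -(m:ℤ) then -(m:ℤ) else d := by
  induction m with
  | zero => simp; intros; omega
  | succ m ih =>
    rw [Finset.sum_Icc_succ_top (by omega)]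
    rw [ih]
    push_cast
    split_ifs <;> omega

lemma sum_chi_eq {n : ℕ} (x y : Fin n → ℤ) (m : ℕ) (hb : ∀ i, ((y - x) i).natAbs ≤ m) :
    ∑ k ∈ Icc 1 m, chi x y k = y - x := by
  funext i
  rw [Finset.sum_apply]
  have : ∀ k ∈ Icc 1 m, chi x y k i =
      ((if (k:ℤ) ≤ y i - x i then (1:ℤ) else 0) - (if y i - x i ≤ -(k:ℤ) then 1 else 0)) :=
    fun k _ => rfl
  rw [Finset.sum_congr rfl this, sum_chi_scalar m (y i - x i)]
  have := hb i
  simp only [Pi.sub_apply] at this ⊢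
  split_ifs <;> omega

-- sign lemmas for sums of chi
lemma sum_chi_sign {n : ℕ} (x y : Fin n → ℤ) (T : Finset ℕ) (hT : ∀ k ∈ T, 1 ≤ k)
    (i : Fin n) :
    (0 < y i - x i → 0 ≤ (∑ k ∈ T, chi x y k) i) ∧
    (y i - x i = 0 → (∑ k ∈ T, chi x y k) i = 0) ∧
    (y i - x i < 0 → (∑ k ∈ T, chi x y k) i ≤ 0) := by
  rw [Finset.sum_apply]
  refine ⟨fun h => Finset.sum_nonneg fun k hk => ?_, fun h => Finset.sum_eq_zero fun k hk => ?_,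
    fun h => Finset.sum_nonpos fun k hk => ?_⟩ <;>
  · have h1 : (1:ℤ) ≤ (k:ℤ) := by exact_mod_cast hT k hk
    unfold chi
    split_ifs <;> omega

lemma normInf_dec1 {n : ℕ} {x y : Fin n → ℤ} {m : ℕ} (hm : normInf (y - x) = m)
    (h1 : 1 ≤ m) : normInf ((y - x) - chi x y 1) = m - 1 := by
  apply normInf_eq
  · intro i
    have hb := le_normInf (y - x) i
    rw [hm] at hb
    simp only [Pi.sub_apply] at hb ⊢
    unfold chi
    split_ifs <;> omega
  · obtain ⟨i, hi⟩ := exists_normInf (y - x) (by omega)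
    rw [hm] at hi
    refine ⟨i, ?_⟩
    simp only [Pi.sub_apply]
    unfold chi
    simp only [Pi.sub_apply] at hi
    split_ifs <;> omega

lemma normInf_dec2 {n : ℕ} {x y : Fin n → ℤ} {m : ℕ} (hm : normInf (y - x) = m)
    (h1 : 2 ≤ m) : normInf ((y - x) - chi x y 2) = m - 1 := by
  apply normInf_eq
  · intro i
    have hb := le_normInf (y - x) i
    rw [hm] at hb
    simp only [Pi.sub_apply] at hb ⊢
    unfold chi
    push_cast
    split_ifs <;> omega
  · obtain ⟨i, hi⟩ := exists_normInf (y - x) (by omega)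
    rw [hm] at hi
    refine ⟨i, ?_⟩
    simp only [Pi.sub_apply]
    unfold chi
    simp only [Pi.sub_apply] at hi
    push_cast
    split_ifs <;> omega

lemma subL {n : ℕ} {S : Set (Fin n → ℤ)} (hS : DDMConvexSet S) :
    ∀ r : ℕ, ∀ a b : Fin n → ℤ, a ∈ S → b ∈ S → normInf (a - b) = r →
      b + chi b a 1 ∈ S := by
  intro r
  induction r using Nat.strong_induction_on with
  | _ r IH =>
    intro a b ha hb hr
    by_cases hr1 : r ≤ 1
    · have : b + chi b a 1 = a := by
        funext i
        have hbd := le_normInf (a - b) i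
        rw [hr] at hbd
        simp only [Pi.add_apply]
        unfold chi
        simp only [Pi.sub_apply] at hbd ⊢
        split_ifs <;> omega
      rw [this]; exact ha
    · push_neg at hr1
      set w := dmu a b with hw
      have hwS : w ∈ S := (hS a ha b hb).1
      have hwb : ∀ i, (w - b) i = (a i - b i) - tH (a i - b i) := by
        intro i
        simp only [Pi.sub_apply, hw, dmu_apply]
        unfold tH
        split_ifs <;> omega
      have hnw : normInf (w - b) = (r + 1) / 2 := by
        apply normInf_eq
        · intro i
          rw [hwb i, aH_natAbs]
          have := le_normInf (a - b) i
          rw [hr] at this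
          simp only [Pi.sub_apply] at this
          omega
        · obtain ⟨i, hi⟩ := exists_normInf (a - b) (by omega)
          rw [hr] at hi
          refine ⟨i, ?_⟩
          rw [hwb i, aH_natAbs]
          simp only [Pi.sub_apply] at hi
          omega
      have hchi : chi b w 1 = chi b a 1 := by
        funext i
        unfold chi
        have := hwb i
        simp only [Pi.sub_apply] at this
        have h2 : w i - b i = (a i - b i) - tH (a i - b i) := this
        rw [h2]
        unfold tH
        split_ifs <;> omega
      have := IH ((r + 1) / 2) (by omega) w b hwS hb hnw
      rwa [hchi] at this

lemma Slem {n : ℕ} {S : Set (Fin n → ℤ)} (hS : DDMConvexSet S) :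
    ∀ m : ℕ, ∀ x y : Fin n → ℤ, x ∈ S → y ∈ S → normInf (y - x) = m →
      ∀ T ⊆ Icc 1 m, x + ∑ k ∈ T, chi x y k ∈ S := by
  intro m
  induction m using Nat.strong_induction_on with
  | _ m IH =>
    intro x y hx hy hm T hT
    rcases Nat.eq_zero_or_pos m with h0 | hpos
    · subst h0
      have : T = ∅ := Finset.subset_empty.mp (by simpa using hT)
      subst this
      simpa using hx
    · by_cases h1T : (1 : ℕ) ∈ T
      · -- peel from the x side
        set x₁ := x + chi x y 1 with hx₁def
        have hx₁ : x₁ ∈ S := subL hS m y x hy hx hm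
        have hdist : normInf (y - x₁) = m - 1 := by
          have : y - x₁ = (y - x) - chi x y 1 := by rw [hx₁def]; abel
          rw [this]; exact normInf_dec1 hm hpos
        set T' := (T.erase 1).image (· - 1) with hT'def
        have hT' : T' ⊆ Icc 1 (m - 1) := by
          intro k hk
          simp only [hT'def, Finset.mem_image, Finset.mem_erase] at hk
          obtain ⟨j, ⟨hj1, hjT⟩, hjk⟩ := hk
          have := hT hjT
          simp only [Finset.mem_Icc] at this ⊢
          omega
        have hmem := IH (m - 1) (by omega) x₁ y hx₁ hy hdist T' hT'
        have hsum : ∑ k ∈ T', chi x₁ y k = ∑ j ∈ T.erase 1, chi x y j := by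
          rw [hT'def, Finset.sum_image (by
            intro a ha b hb hab
            have ha' := hT (Finset.mem_of_mem_erase ha)
            have hb' := hT (Finset.mem_of_mem_erase hb)
            simp only [Finset.mem_Icc] at ha' hb'
            simp only at hab
            omega)]
          apply Finset.sum_congr rfl
          intro j hj
          have hj1 : j ≠ 1 := (Finset.mem_erase.mp hj).1
          have hj' := hT (Finset.mem_of_mem_erase hj)
          simp only [Finset.mem_Icc] at hj'
          rw [chi_shift x y (j - 1) (by omega), show j - 1 + 1 = j by omega]
        rw [hsum] at hmem
        have : x₁ + ∑ j ∈ T.erase 1, chi x y j = x + ∑ k ∈ T, chi x y k := by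
          rw [hx₁def, add_assoc, Finset.add_sum_erase T (chi x y) h1T]
        rwa [this] at hmem
      · -- peel from the y side
        set y₁ := y - chi x y 1 with hy₁def
        have hy₁ : y₁ ∈ S := by
          have := subL hS m x y hx hy (by rw [normInf_comm x y]; exact hm)
          rwa [chi_neg x y 1 le_rfl, ← sub_eq_add_neg, ← hy₁def] at this
        have hdist : normInf (y₁ - x) = m - 1 := by
          have : y₁ - x = (y - x) - chi x y 1 := by rw [hy₁def]; abel
          rw [this]; exact normInf_dec1 hm hpos
        set T'' := T.image (· - 1) with hT''def
        have hTsub : ∀ j ∈ T, 2 ≤ j ∧ j ≤ m := by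
          intro j hj
          have := hT hj
          simp only [Finset.mem_Icc] at this
          have : 1 ≤ j ∧ j ≤ m := this
          refine ⟨?_, this.2⟩
          rcases Nat.lt_or_ge j 2 with h | h
          · interval_cases j
            · omega
            · exact absurd hj h1T
          · exact h
        have hT'' : T'' ⊆ Icc 1 (m - 1) := by
          intro k hk
          simp only [hT''def, Finset.mem_image] at hk
          obtain ⟨j, hjT, hjk⟩ := hk
          have := hTsub j hjT
          simp only [Finset.mem_Icc]
          omega
        have hmem := IH (m - 1) (by omega) x y₁ hx hy₁ hdist T'' hT''
        have hsum : ∑ k ∈ T'', chi x y₁ k = ∑ j ∈ T, chi x y j := by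
          rw [hT''def, Finset.sum_image (by
            intro a ha b hb hab
            have ha' := hTsub a ha
            have hb' := hTsub b hb
            simp only at hab
            omega)]
          apply Finset.sum_congr rfl
          intro j hj
          have hj' := hTsub j hj
          rw [hy₁def, chi_shift' x y (j - 1) (by omega), show j - 1 + 1 = j by omega]
        rwa [hsum] at hmem

lemma ereal_real {a : EReal} (h1 : a ≠ ⊥) (h2 : a ≠ ⊤) : ∃ r : ℝ, a = (r : EReal) :=
  ⟨a.toReal, (EReal.coe_toReal h2 h1).symm⟩

section Q
variable {n : ℕ} (f : (Fin n → ℤ) → EReal)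

lemma Qlem (hbot : ∀ x, f x ≠ ⊥)
    (hf2 : ∀ x y : Fin n → ℤ, normInf (x - y) = 2 →
      f (dmu x y) + f (dmu y x) ≤ f x + f y)
    (hdom : DDMConvexSet {x : Fin n → ℤ | f x ≠ ⊤}) :
    ∀ m : ℕ, ∀ x y : Fin n → ℤ, f x ≠ ⊤ → f y ≠ ⊤ → normInf (y - x) = m →
      f (x + chi x y 1) + f (y - chi x y 1) ≤ f x + f y := by
  intro m
  induction m using Nat.strong_induction_on with
  | _ m IH =>
    intro x y hx hy hm
    have hb : ∀ i, (y i - x i).natAbs ≤ m := by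
      intro i
      have := le_normInf (y - x) i
      rw [hm] at this
      simpa using this
    by_cases hm1 : m ≤ 1
    · have hchi : chi x y 1 = y - x := by
        funext i
        have := hb i
        unfold chi
        simp only [Pi.sub_apply]
        split_ifs <;> omega
      rw [hchi, show x + (y - x) = y by abel, show y - (y - x) = x by abel, add_comm]
    · by_cases hm2 : m = 2
      · subst hm2
        have h1 : dmu x y = y - chi x y 1 := by
          funext i
          rw [dmu_apply]
          have := hb i
          unfold tH chi
          simp only [Pi.sub_apply]
          split_ifs <;> omega
        have h2 : dmu y x = x + chi x y 1 := by
          funext i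
          rw [dmu_apply]
          have := hb i
          unfold tH chi
          simp only [Pi.add_apply, Pi.sub_apply]
          split_ifs <;> omega
        have := hf2 x y (by rw [normInf_comm x y]; exact hm)
        rw [h1, h2, add_comm] at this
        exact this
      · -- m ≥ 3
        have hm3 : 3 ≤ m := by omega
        set S := {x : Fin n → ℤ | f x ≠ ⊤} with hSdef
        have hxS : x ∈ S := hx
        have hyS : y ∈ S := hy
        set c1 := chi x y 1 with hc1
        set c2 := chi x y 2 with hc2
        have hx2S : x + c2 ∈ S := by
          have := Slem hdom m x y hxS hyS hm {2}
            (by intro k hk; simp only [Finset.mem_singleton] at hk; subst hk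
                simp only [Finset.mem_Icc]; omega)
          simpa using this
        have hqS : x + (c1 + c2) ∈ S := by
          have h12 : ({1, 2} : Finset ℕ) ⊆ Icc 1 m := by
            intro k hk
            simp only [Finset.mem_insert, Finset.mem_singleton] at hk
            simp only [Finset.mem_Icc]
            omega
          have := Slem hdom m x y hxS hyS hm {1, 2} h12
          rwa [Finset.sum_pair (by norm_num : (1:ℕ) ≠ 2)] at this
        have huS : x + c1 ∈ S := by
          have := Slem hdom m x y hxS hyS hm {1}
            (by intro k hk; simp only [Finset.mem_singleton] at hk; subst hk
                simp only [Finset.mem_Icc]; omega)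
          simpa using this
        have hvS : y - c1 ∈ S := by
          have := subL hdom m x y hxS hyS (by rw [normInf_comm x y]; exact hm)
          rwa [chi_neg x y 1 le_rfl, ← sub_eq_add_neg] at this
        set q := x + (c1 + c2) with hqdef
        have hq2 : normInf (q - x) = 2 := by
          apply normInf_eq
          · intro i
            simp only [hqdef, hc1, hc2, Pi.add_apply, Pi.sub_apply]
            unfold chi
            push_cast
            split_ifs <;> omega
          · obtain ⟨i, hi⟩ := exists_normInf (y - x) (by omega)
            rw [hm] at hi
            simp only [Pi.sub_apply] at hi
            refine ⟨i, ?_⟩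
            simp only [hqdef, hc1, hc2, Pi.add_apply, Pi.sub_apply]
            unfold chi
            push_cast
            have hmz : (3:ℤ) ≤ (m:ℤ) := by exact_mod_cast hm3
            split_ifs <;> omega
        have hdxq : dmu x q = x + c2 := by
          funext i
          rw [dmu_apply]
          simp only [hqdef, hc1, hc2, Pi.add_apply]
          unfold tH chi
          push_cast
          split_ifs <;> omega
        have hdqx : dmu q x = x + c1 := by
          funext i
          rw [dmu_apply]
          simp only [hqdef, hc1, hc2, Pi.add_apply]
          unfold tH chi
          push_cast
          split_ifs <;> omega
        have hB := hf2 x q (by rw [normInf_comm x q]; exact hq2)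
        rw [hdxq, hdqx] at hB
        have hdist : normInf (y - (x + c2)) = m - 1 := by
          have : y - (x + c2) = (y - x) - chi x y 2 := by rw [hc2]; abel
          rw [this]
          exact normInf_dec2 hm (by omega)
        have hchi2 : chi (x + c2) y 1 = c1 := by
          funext i
          simp only [hc1, hc2]
          unfold chi
          simp only [Pi.add_apply]
          push_cast
          split_ifs <;> omega
        have hC := IH (m - 1) (by omega) (x + c2) y hx2S hy hdist
        rw [hchi2, show x + c2 + c1 = q by rw [hqdef]; abel] at hC
        -- lift to ℝ
        obtain ⟨rx, hrx⟩ := ereal_real (hbot x) hx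
        obtain ⟨ry, hry⟩ := ereal_real (hbot y) hy
        obtain ⟨r2, hr2⟩ := ereal_real (hbot _) hx2S
        obtain ⟨rq, hrq⟩ := ereal_real (hbot _) hqS
        obtain ⟨ru, hru⟩ := ereal_real (hbot _) huS
        obtain ⟨rv, hrv⟩ := ereal_real (hbot _) hvS
        rw [hrx, hrq, hr2, hru] at hB
        rw [hrq, hrv, hr2, hry] at hC
        rw [hrx, hry, hru, hrv]
        rw [← EReal.coe_add, ← EReal.coe_add, EReal.coe_le_coe_iff] at hB hC ⊢
        linarith

end Q

lemma Icc_erase_one (m : ℕ) : (Icc 1 m).erase 1 = Icc 2 m := by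
  ext k
  simp only [Finset.mem_erase, Finset.mem_Icc]
  omega

lemma Icc_image_pred (m : ℕ) : (Icc 2 m).image (· - 1) = Icc 1 (m - 1) := by
  ext k
  simp only [Finset.mem_image, Finset.mem_Icc]
  constructor
  · rintro ⟨j, hj, rfl⟩; omega
  · intro hk; exact ⟨k + 1, by omega, by omega⟩

section C
variable {n : ℕ} (f : (Fin n → ℤ) → EReal)

lemma Clem (hbot : ∀ x, f x ≠ ⊥)
    (hf2 : ∀ x y : Fin n → ℤ, normInf (x - y) = 2 →
      f (dmu x y) + f (dmu y x) ≤ f x + f y)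
    (hdom : DDMConvexSet {x : Fin n → ℤ | f x ≠ ⊤})
    (y : Fin n → ℤ) :
    ∀ m : ℕ, ∀ x : Fin n → ℤ, f x ≠ ⊤ → normInf (y - x) = m →
      ∀ I J : Finset ℕ, I ∪ J = Finset.Icc 1 m → Disjoint I J →
      f (x + ∑ i ∈ I, chi x y i) + f (x + ∑ j ∈ J, chi x y j)
        ≤ f x + f (x + (∑ i ∈ I, chi x y i) + (∑ j ∈ J, chi x y j)) := by
  intro m
  induction m using Nat.strong_induction_on with
  | _ m IH =>
    intro x hx hm I J hIJ hdisj
    have hb : ∀ i, ((y - x) i).natAbs ≤ m := by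
      intro i
      have := le_normInf (y - x) i
      rw [hm] at this
      exact this
    have hxy : x + (∑ i ∈ I, chi x y i) + (∑ j ∈ J, chi x y j) = y := by
      rw [add_assoc, ← Finset.sum_union hdisj, hIJ, sum_chi_eq x y m hb]
      abel
    rcases Nat.eq_zero_or_pos m with h0 | hpos
    · subst h0
      have hun : I ∪ J = ∅ := by simpa using hIJ
      obtain ⟨hI0, hJ0⟩ := Finset.union_eq_empty.mp hun
      subst hI0; subst hJ0
      simp
    · rw [hxy]
      by_cases hy : f y = ⊤
      · rw [hy, EReal.add_top_of_ne_bot (hbot x)]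
        exact le_top
      · have key : ∀ I J : Finset ℕ, I ∪ J = Finset.Icc 1 m → Disjoint I J → (1:ℕ) ∈ J →
            f (x + ∑ i ∈ I, chi x y i) + f (x + ∑ j ∈ J, chi x y j) ≤ f x + f y := by
          clear hIJ hdisj hxy
          intro I J hIJ hdisj h1J
          have hxy : x + (∑ i ∈ I, chi x y i) + (∑ j ∈ J, chi x y j) = y := by
            rw [add_assoc, ← Finset.sum_union hdisj, hIJ, sum_chi_eq x y m hb]
            abel
          have h1I : (1:ℕ) ∉ I := fun h => (Finset.disjoint_left.mp hdisj h) h1J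
          have hIsub : I ⊆ Icc 1 m := hIJ ▸ Finset.subset_union_left
          have hJsub : J ⊆ Icc 1 m := hIJ ▸ Finset.subset_union_right
          have hI2 : ∀ k ∈ I, 2 ≤ k ∧ k ≤ m := by
            intro k hk
            have h := hIsub hk
            simp only [Finset.mem_Icc] at h
            have hk1 : k ≠ 1 := fun e => h1I (e ▸ hk)
            omega
          have hJm : ∀ k ∈ J, 1 ≤ k ∧ k ≤ m := by
            intro k hk
            have h := hJsub hk
            simp only [Finset.mem_Icc] at h
            exact h
          have hyS : y ∈ {x : Fin n → ℤ | f x ≠ ⊤} := hy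
          have hxS : x ∈ {x : Fin n → ℤ | f x ≠ ⊤} := hx
          set x₁ := x + chi x y 1 with hx₁def
          have hx₁S : x₁ ∈ {x : Fin n → ℤ | f x ≠ ⊤} :=
            subL hdom m y x hyS hxS hm
          have hdist : normInf (y - x₁) = m - 1 := by
            have : y - x₁ = (y - x) - chi x y 1 := by rw [hx₁def]; abel
            rw [this]
            exact normInf_dec1 hm hpos
          -- shifted partition
          have hunion : I.image (· - 1) ∪ (J.erase 1).image (· - 1) = Icc 1 (m - 1) := by
            rw [← Finset.image_union, show I ∪ J.erase 1 = (I ∪ J).erase 1 by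
              rw [Finset.erase_union_distrib, Finset.erase_eq_of_notMem h1I],
              hIJ, Icc_erase_one, Icc_image_pred]
          have hdisj' : Disjoint (I.image (· - 1)) ((J.erase 1).image (· - 1)) := by
            rw [Finset.disjoint_left]
            intro a haI haJ
            simp only [Finset.mem_image, Finset.mem_erase] at haI haJ
            obtain ⟨j, hjI, hj⟩ := haI
            obtain ⟨l, ⟨hl1, hlJ⟩, hl⟩ := haJ
            have h2 := hI2 j hjI
            have h3 := hJm l hlJ
            have : j = l := by omega
            subst this
            exact (Finset.disjoint_left.mp hdisj hjI) hlJ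
          have hIH := IH (m - 1) (by omega) x₁ hx₁S hdist
            (I.image (· - 1)) ((J.erase 1).image (· - 1)) hunion hdisj'
          have hsumI : ∑ k ∈ I.image (· - 1), chi x₁ y k = ∑ j ∈ I, chi x y j := by
            rw [Finset.sum_image (by
              intro a ha b hb hab
              have := hI2 a ha; have := hI2 b hb
              simp only at hab
              omega)]
            apply Finset.sum_congr rfl
            intro j hj
            have := hI2 j hj
            rw [chi_shift x y (j - 1) (by omega), show j - 1 + 1 = j by omega]
          have hsumJ : ∑ k ∈ (J.erase 1).image (· - 1), chi x₁ y k
              = ∑ j ∈ J.erase 1, chi x y j := by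
            rw [Finset.sum_image (by
              intro a ha b hb hab
              have ha2 := hJm a (Finset.mem_of_mem_erase ha)
              have hb2 := hJm b (Finset.mem_of_mem_erase hb)
              have ha1 : a ≠ 1 := (Finset.mem_erase.mp ha).1
              have hb1 : b ≠ 1 := (Finset.mem_erase.mp hb).1
              simp only at hab
              omega)]
            apply Finset.sum_congr rfl
            intro j hj
            have hj1 : j ≠ 1 := (Finset.mem_erase.mp hj).1
            have := hJm j (Finset.mem_of_mem_erase hj)
            rw [chi_shift x y (j - 1) (by omega), show j - 1 + 1 = j by omega]
          rw [hsumI, hsumJ] at hIH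
          have hJ' : x₁ + ∑ j ∈ J.erase 1, chi x y j = x + ∑ j ∈ J, chi x y j := by
            rw [hx₁def, add_assoc, Finset.add_sum_erase J (chi x y) h1J]
          have hlast : x₁ + (∑ i ∈ I, chi x y i) + (∑ j ∈ J.erase 1, chi x y j) = y := by
            have e1 : chi x y 1 + ∑ j ∈ J.erase 1, chi x y j = ∑ j ∈ J, chi x y j :=
              Finset.add_sum_erase J (chi x y) h1J
            calc x₁ + (∑ i ∈ I, chi x y i) + (∑ j ∈ J.erase 1, chi x y j)
                = x + (∑ i ∈ I, chi x y i) + (chi x y 1 + ∑ j ∈ J.erase 1, chi x y j) := by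
                  rw [hx₁def]; abel
              _ = x + (∑ i ∈ I, chi x y i) + (∑ j ∈ J, chi x y j) := by rw [e1]
              _ = y := hxy
          rw [hJ', hlast] at hIH
          -- hIH : f (x₁ + ∑ I) + f (x + ∑ J) ≤ f x₁ + f y
          set w := x₁ + ∑ i ∈ I, chi x y i with hwdef
          have hwS : w ∈ {x : Fin n → ℤ | f x ≠ ⊤} := by
            have hins : insert 1 I ⊆ Icc 1 m := by
              intro k hk
              rcases Finset.mem_insert.mp hk with rfl | hk'
              · simp only [Finset.mem_Icc]; omega
              · exact hIsub hk'
            have := Slem hdom m x y hxS hyS hm (insert 1 I) hins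
            rw [Finset.sum_insert h1I] at this
            have he : x + (chi x y 1 + ∑ i ∈ I, chi x y i) = w := by
              rw [hwdef, hx₁def]; abel
            rwa [he] at this
          have huS : x + ∑ i ∈ I, chi x y i ∈ {x : Fin n → ℤ | f x ≠ ⊤} :=
            Slem hdom m x y hxS hyS hm I hIsub
          have hvS : x + ∑ j ∈ J, chi x y j ∈ {x : Fin n → ℤ | f x ≠ ⊤} :=
            Slem hdom m x y hxS hyS hm J hJsub
          have hchiw : chi x w 1 = chi x y 1 := by
            funext i
            have hw_i : w i - x i = ((if (1:ℤ) ≤ y i - x i then (1:ℤ) else 0)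
                - (if y i - x i ≤ -(1:ℤ) then 1 else 0)) + (∑ k ∈ I, chi x y k) i := by
              simp only [hwdef, hx₁def, Pi.add_apply, Finset.sum_apply]
              unfold chi
              push_cast
              ring
            obtain ⟨hp, hz, hn⟩ := sum_chi_sign x y I (fun k hk => (hI2 k hk).1.trans' (by omega)) i
            unfold chi
            rw [hw_i]
            push_cast
            rcases lt_trichotomy (y i - x i) 0 with h | h | h
            · have := hn h; split_ifs <;> omega
            · have := hz h; split_ifs <;> omega
            · have := hp h; split_ifs <;> omega
          have hQ := Qlem f hbot hf2 hdom (normInf (w - x)) x w hxS hwS rfl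
          rw [hchiw, show w - chi x y 1 = x + ∑ i ∈ I, chi x y i by
            rw [hwdef, hx₁def]; abel] at hQ
          -- hQ : f (x + chi x y 1) + f (x + ∑ I) ≤ f x + f w
          rw [← hx₁def] at hQ
          -- lift to ℝ
          obtain ⟨rx, hrx⟩ := ereal_real (hbot x) hx
          obtain ⟨ry, hry⟩ := ereal_real (hbot y) hy
          obtain ⟨r1, hr1⟩ := ereal_real (hbot _) hx₁S
          obtain ⟨rw', hrw⟩ := ereal_real (hbot _) hwS
          obtain ⟨ru, hru⟩ := ereal_real (hbot _) huS
          obtain ⟨rv, hrv⟩ := ereal_real (hbot _) hvS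
          rw [hrw, hrv, hr1, hry] at hIH
          rw [hr1, hru, hrx, hrw] at hQ
          rw [hru, hrv, hrx, hry]
          rw [← EReal.coe_add, ← EReal.coe_add, EReal.coe_le_coe_iff] at hIH hQ ⊢
          linarith
        have h1 : (1:ℕ) ∈ I ∪ J := by
          rw [hIJ]
          simp only [Finset.mem_Icc]
          omega
        rcases Finset.mem_union.mp h1 with h1I | h1J
        · have := key J I (by rw [Finset.union_comm]; exact hIJ) hdisj.symm h1I
          rw [add_comm (f (x + ∑ i ∈ I, chi x y i))]
          exact this
        · exact key I J hIJ hdisj h1J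

end C

/-- If `f` satisfies the DDM inequality for all pairs at ℓ∞-distance 2 and `dom f`
is a DDM-convex set, then for `x ∈ dom f`, `y ∈ ℤⁿ` with `‖y - x‖_∞ = m`, and any
partition `(I, J)` of `{1, …, m}`, with `d₁ = Σ_{i∈I}(1_{A_i} - 1_{B_i})` and
`d₂ = Σ_{j∈J}(1_{A_j} - 1_{B_j})`, one has
`f(x) + f(x + d₁ + d₂) ≥ f(x + d₁) + f(x + d₂)`. -/
theorem ddmc2_parallelogram {n : ℕ} (f : (Fin n → ℤ) → EReal)
    (hbot : ∀ x, f x ≠ ⊥)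
    (hf2 : ∀ x y : Fin n → ℤ, normInf (x - y) = 2 →
      f (dmu x y) + f (dmu y x) ≤ f x + f y)
    (hdom : DDMConvexSet {x : Fin n → ℤ | f x ≠ ⊤})
    (x : Fin n → ℤ) (hx : f x ≠ ⊤) (y : Fin n → ℤ)
    (m : ℕ) (hm : normInf (y - x) = m)
    (I J : Finset ℕ) (hIJ : I ∪ J = Finset.Icc 1 m) (hdisj : Disjoint I J) :
    f (x + ∑ i ∈ I, chi x y i) + f (x + ∑ j ∈ J, chi x y j)
      ≤ f x + f (x + (∑ i ∈ I, chi x y i) + (∑ j ∈ J, chi x y j)) :=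
  Clem f hbot hf2 hdom y m x hx hm I J hIJ hdisj
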